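/- Let S₀ be semisimple on ℝⁿ·q-periodic sequence space Y_q as above. Then Y_q decomposes as the direct sum Y_q = ξ(U) ⊕ Im(Ŝ₀ − σ), where U = ker(S₀^q − I), and this decomposition is invariant under Â₀, Ŝ₀ and σ. -/

import Mathlib

/-- The space `Y_q` of `q`-periodic sequences in `ℝⁿ`, as a submodule of `ℤ → ℝⁿ`. -/
def perSub (n q : ℕ) : Submodule ℝ (ℤ → (Fin n → ℝ)) where
  carrier := {x | ∀ k : ℤ, x (k + q) = x k}
  add_mem' hx hy := fun k => by simp [hx k, hy k]
  zero_mem' := fun k => rfl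
  smul_mem' c x hx := fun k => by simp [hx k]

/-- The map `ξ(u) = (S₀^i u)_{i ∈ ℤ}` as a linear map into the space of sequences. -/
noncomputable def xiMap {n : ℕ} (S : (Fin n → ℝ) ≃ₗ[ℝ] (Fin n → ℝ)) :
    (Fin n → ℝ) →ₗ[ℝ] (ℤ → (Fin n → ℝ)) where
  toFun u := fun i => (S ^ i) u
  map_add' x y := by funext i; simp
  map_smul' c x := by funext i; simp

/-!
On the finite-dimensional space `Y_q` the operator `Ŝ₀` is semisimple because `S₀` is, and the
shift `σ` is semisimple because `σ ^ q = 1` there; as they commute, `T = Ŝ₀ - σ` is semisimple on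
`Y_q`, so `Y_q = ker T ⊕ T(Y_q)`. Solving `T x = 0` gives `x k = S₀ ^ k (x 0)`, and such a
sequence is `q`-periodic exactly when `x 0 ∈ U`, so `ker T ∩ Y_q = ξ(U)`. Every operator that
preserves `Y_q` and commutes with `T` preserves both `ker T ∩ Y_q` and `T(Y_q)`; this applies to
`Â₀`, `Ŝ₀` and `σ`.
-/

open Polynomial LinearMap Module

namespace Module.End

section CommRing

variable {R M : Type*} [CommRing R] [AddCommGroup M] [Module R M] {f : End R M}

theorem IsSemisimple.disjoint_ker_range (hf : f.IsSemisimple) : Disjoint (ker f) (range f) := by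
  have hker : ker f ∈ f.invtSubmodule := fun x hx => by simp_all
  obtain ⟨C, hC, hcompl⟩ := isSemisimple_iff.1 hf (ker f) hker
  rw [Submodule.disjoint_def]
  rintro _ hv ⟨w, rfl⟩
  -- writing `w = a + c` along `ker f ⊕ C`, the vector `f w = f c` lies in `ker f ⊓ C = ⊥`
  obtain ⟨a, ha, c, hc, rfl⟩ :=
    Submodule.mem_sup.1 (hcompl.sup_eq_top ▸ Submodule.mem_top (x := w))
  rw [map_add, mem_ker.1 ha, zero_add] at hv ⊢
  exact Submodule.disjoint_def.1 hcompl.disjoint _ hv (hC hc)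

end CommRing

section Semiring

variable {R M : Type*} [Semiring R] [AddCommMonoid M] [Module R M] {f g : End R M}
  {p : Submodule R M}

theorem map_inf_ker_le_of_commute (hp : p ∈ f.invtSubmodule) (h : Commute f g) :
    (p ⊓ ker g).map f ≤ p ⊓ ker g := by
  refine (mem_invtSubmodule_iff_map_le f).1 (invtSubmodule.inf_mem hp fun x hx => ?_)
  change g (f x) = 0
  rw [← mul_apply, ← h.eq, mul_apply, mem_ker.1 hx, map_zero]

theorem map_map_le_of_commute (hp : p ∈ f.invtSubmodule) (h : Commute f g) :
    (p.map g).map f ≤ p.map g := by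
  rw [← Submodule.map_comp, ← mul_eq_comp, h.eq, mul_eq_comp, Submodule.map_comp]
  exact Submodule.map_mono ((mem_invtSubmodule_iff_map_le f).1 hp)

end Semiring

section Field

variable {K V : Type*} [Field K] [AddCommGroup V] [Module K V]

theorem isSemisimple_of_pow_eq_one {f : End K V} {q : ℕ} (hq : (q : K) ≠ 0) (hf : f ^ q = 1) :
    f.IsSemisimple :=
  isSemisimple_of_squarefree_aeval_eq_zero (separable_X_pow_sub_C 1 hq one_ne_zero).squarefree
    (by simp [hf])

theorem IsSemisimple.isCompl_ker_range [FiniteDimensional K V] {f : End K V}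
    (hf : f.IsSemisimple) : IsCompl (ker f) (range f) :=
  (Submodule.isCompl_iff_disjoint _ _ (by rw [add_comm, finrank_range_add_finrank_ker])).2
    hf.disjoint_ker_range

theorem inf_ker_inf_map_eq_bot_and_sup_eq_of_isSemisimple_restrict {T : End K V}
    {p : Submodule K V} [FiniteDimensional K p] (hp : ∀ x ∈ p, T x ∈ p)
    (hT : IsSemisimple (T.restrict hp)) :
    p ⊓ ker T ⊓ p.map T = ⊥ ∧ p ⊓ ker T ⊔ p.map T = p := by
  have hker : (ker (T.restrict hp)).map p.subtype = p ⊓ ker T := by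
    rw [ker_restrict, Submodule.map_comap_subtype]
  have hrange : (range (T.restrict hp)).map p.subtype = p.map T := by
    rw [range_restrict, Submodule.map_comap_subtype,
      inf_eq_right.2 (Submodule.map_le_iff_le_comap.2 hp)]
  have hc := hT.isCompl_ker_range
  rw [← hker, ← hrange, ← Submodule.map_inf _ p.injective_subtype, ← Submodule.map_sup,
    hc.inf_eq_bot, hc.sup_eq_top, Submodule.map_bot, Submodule.map_subtype_top]
  exact ⟨rfl, rfl⟩

end Field

end Module.End

section Sequences

open Module.End

def LinearMap.compLeftAlgHom (R M I : Type*) [CommSemiring R] [AddCommMonoid M] [Module R M] :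
    End R M →ₐ[R] End R (I → M) where
  toFun f := f.compLeft I
  map_one' := rfl
  map_mul' _ _ := rfl
  map_zero' := rfl
  map_add' _ _ := rfl
  commutes' _ := rfl

theorem Module.End.IsSemisimple.compLeft {K M : Type*} [Field K] [AddCommGroup M] [Module K M]
    [FiniteDimensional K M] {f : End K M} (hf : f.IsSemisimple) (I : Type*) :
    IsSemisimple (f.compLeft I) :=
  isSemisimple_of_squarefree_aeval_eq_zero hf.minpoly_squarefree <| by
    change aeval (compLeftAlgHom K M I f) _ = 0
    rw [aeval_algHom_apply, minpoly.aeval, map_zero]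

theorem Commute.compLeft {R M : Type*} [CommSemiring R] [AddCommMonoid M] [Module R M]
    {A B : End R M} (h : Commute A B) (I : Type*) : Commute (A.compLeft I) (B.compLeft I) :=
  h.map (compLeftAlgHom R M I)

variable {R M : Type*} [Ring R] [AddCommGroup M] [Module R M]

theorem commute_compLeft_funLeft_add_one (A : End R M) :
    Commute (A.compLeft ℤ) (funLeft R M (fun i : ℤ => i + 1)) :=
  LinearMap.ext fun _ => rfl

theorem funLeft_add_one_pow_apply (x : ℤ → M) (m : ℕ) (k : ℤ) :
    (funLeft R M (fun i : ℤ => i + 1) ^ m) x k = x (k + m) := by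
  induction m generalizing k with
  | zero => simp
  | succ m ih => rw [pow_succ', mul_apply, funLeft_apply, ih]; push_cast; ring_nf

theorem compLeft_sub_funLeft_add_one_apply (A : End R M) (x : ℤ → M) (k : ℤ) :
    (A.compLeft ℤ - funLeft R M (fun i : ℤ => i + 1)) x k = A (x k) - x (k + 1) :=
  rfl

theorem commute_funLeft_add_one_compLeft_sub_funLeft_add_one (B : End R M) :
    Commute (funLeft R M (fun i : ℤ => i + 1)) (B.compLeft ℤ - funLeft R M (fun i : ℤ => i + 1)) :=
  (commute_compLeft_funLeft_add_one B).symm.sub_right (Commute.refl _)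

theorem commute_compLeft_compLeft_sub_funLeft_add_one {R M : Type*} [CommRing R] [AddCommGroup M]
    [Module R M] {A B : End R M} (h : Commute A B) :
    Commute (A.compLeft ℤ) (B.compLeft ℤ - funLeft R M (fun i : ℤ => i + 1)) :=
  (h.compLeft ℤ).sub_right (commute_compLeft_funLeft_add_one A)

end Sequences

section PeriodicSequences

open Module.End

variable {n q : ℕ}

theorem compLeft_mem_perSub (A : End ℝ (Fin n → ℝ)) {x : ℤ → Fin n → ℝ} (hx : x ∈ perSub n q) :
    A.compLeft ℤ x ∈ perSub n q :=
  fun k => congrArg A (hx k)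

theorem funLeft_add_one_mem_perSub {x : ℤ → Fin n → ℝ} (hx : x ∈ perSub n q) :
    funLeft ℝ (Fin n → ℝ) (fun i : ℤ => i + 1) x ∈ perSub n q :=
  fun k => by simpa [add_right_comm] using hx (k + 1)

theorem funLeft_add_one_restrict_perSub_pow_eq_one :
    (funLeft ℝ (Fin n → ℝ) (fun i : ℤ => i + 1)).restrict
      (fun _ => funLeft_add_one_mem_perSub (n := n) (q := q)) ^ q = 1 := by
  rw [pow_restrict]
  refine LinearMap.ext fun x => Subtype.ext (funext fun k => ?_)
  simp [funLeft_add_one_pow_apply, x.2 k]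

theorem finiteDimensional_perSub (hq : 0 < q) : FiniteDimensional ℝ (perSub n q) := by
  refine .of_injective
    (funLeft ℝ (Fin n → ℝ) (fun j : Fin q => (j : ℤ)) ∘ₗ (perSub n q).subtype) ?_
  rw [injective_iff_map_eq_zero]
  rintro ⟨x, hx⟩ h0
  ext k : 2
  have hmod : x k = x (k % q) := by
    rw [Int.emod_def, mul_comm]
    exact (Function.Periodic.sub_int_mul_eq hx (k / q)).symm
  have hnonneg : 0 ≤ k % q := Int.emod_nonneg k (by omega)
  have hlt : (k % q).toNat < q := by
    have := Int.emod_lt_of_pos k (by omega : (0 : ℤ) < q)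
    omega
  simpa [hmod, Int.toNat_of_nonneg hnonneg] using congrFun h0 ⟨_, hlt⟩

theorem isSemisimple_compLeft_sub_funLeft_add_one_restrict_perSub (hq : 0 < q)
    {A : End ℝ (Fin n → ℝ)} (hA : A.IsSemisimple) :
    IsSemisimple ((A.compLeft ℤ - funLeft ℝ (Fin n → ℝ) (fun i : ℤ => i + 1)).restrict
      (fun _ hx => sub_mem (compLeft_mem_perSub (q := q) A hx)
        (funLeft_add_one_mem_perSub hx))) := by
  have := finiteDimensional_perSub (n := n) hq
  rw [← restrict_sub (fun _ => compLeft_mem_perSub A) (fun _ => funLeft_add_one_mem_perSub)]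
  exact IsSemisimple.sub_of_commute (restrict_commute (commute_compLeft_funLeft_add_one A) _ _)
    ((hA.compLeft ℤ).restrict _)
    (isSemisimple_of_pow_eq_one (Nat.cast_ne_zero.2 hq.ne')
      funLeft_add_one_restrict_perSub_pow_eq_one)

variable (S : (Fin n → ℝ) ≃ₗ[ℝ] (Fin n → ℝ))

theorem xiMap_apply (u : Fin n → ℝ) (k : ℤ) : xiMap S u k = (S ^ k) u :=
  rfl

theorem eq_xiMap_of_forall_apply_add_one {x : ℤ → Fin n → ℝ} (h : ∀ k, x (k + 1) = S (x k)) :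
    x = xiMap S (x 0) := by
  have hconst : Function.Periodic (fun k => (S ^ (-k)) (x k)) 1 := fun k => by
    dsimp only
    rw [h, ← LinearEquiv.mul_apply, ← zpow_add_one, neg_add, neg_add_cancel_right]
  funext k
  have hk : (S ^ (-k)) (x k) = x 0 := by simpa using hconst.int_mul_eq k
  rw [xiMap_apply, ← hk, ← LinearEquiv.mul_apply, ← zpow_add, add_neg_cancel, zpow_zero]
  rfl

theorem ker_compLeft_sub_funLeft_add_one :
    ker ((S : End ℝ (Fin n → ℝ)).compLeft ℤ - funLeft ℝ (Fin n → ℝ) (fun i : ℤ => i + 1)) =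
      range (xiMap S) := by
  ext x
  rw [mem_ker, mem_range, funext_iff]
  simp only [compLeft_sub_funLeft_add_one_apply, Pi.zero_apply, sub_eq_zero]
  constructor
  · exact fun h => ⟨x 0, (eq_xiMap_of_forall_apply_add_one S fun k => (h k).symm).symm⟩
  · rintro ⟨u, rfl⟩ k
    rw [xiMap_apply, xiMap_apply, add_comm k 1, zpow_one_add]
    rfl

theorem xiMap_mem_perSub_iff {u : Fin n → ℝ} :
    xiMap S u ∈ perSub n q ↔ u ∈ ker ((S : End ℝ (Fin n → ℝ)) ^ q - 1) := by
  have hpow : ((S : End ℝ (Fin n → ℝ)) ^ q) u = (S ^ (q : ℤ)) u := by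
    simp [pow_apply, LinearEquiv.pow_apply]
  rw [mem_ker, LinearMap.sub_apply, hpow, one_apply, sub_eq_zero]
  constructor
  · intro h
    simpa [xiMap_apply] using h 0
  · intro h k
    rw [xiMap_apply, xiMap_apply, zpow_add, LinearEquiv.mul_apply, h]

theorem perSub_inf_ker_eq_map_xiMap :
    perSub n q ⊓
        ker ((S : End ℝ (Fin n → ℝ)).compLeft ℤ - funLeft ℝ (Fin n → ℝ) (fun i : ℤ => i + 1)) =
      (ker ((S : End ℝ (Fin n → ℝ)) ^ q - 1)).map (xiMap S) := by
  rw [ker_compLeft_sub_funLeft_add_one, inf_comm, ← Submodule.map_comap_eq]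
  congr 1
  ext u
  exact xiMap_mem_perSub_iff S

end PeriodicSequences

theorem Yq_decomposition_general {n q : ℕ} (hq : 0 < q)
    (S : (Fin n → ℝ) ≃ₗ[ℝ] (Fin n → ℝ)) (N : (Fin n → ℝ) →ₗ[ℝ] (Fin n → ℝ))
    (hS : Module.End.IsSemisimple (S : (Fin n → ℝ) →ₗ[ℝ] (Fin n → ℝ)))
    (hcomm : Commute (S : (Fin n → ℝ) →ₗ[ℝ] (Fin n → ℝ)) N) :
    -- notation
    ∀ (Sl : (Fin n → ℝ) →ₗ[ℝ] (Fin n → ℝ)), Sl = (S : (Fin n → ℝ) →ₗ[ℝ] (Fin n → ℝ)) →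
    ∀ (σl Shat Ahat T : (ℤ → (Fin n → ℝ)) →ₗ[ℝ] (ℤ → (Fin n → ℝ))),
      σl = LinearMap.funLeft ℝ (Fin n → ℝ) (fun i => i + 1) →
      Shat = Sl.compLeft ℤ →
      Ahat = (Sl + N).compLeft ℤ →
      T = Shat - σl →
    ∀ (U : Submodule ℝ (Fin n → ℝ)), U = LinearMap.ker (Sl ^ q - 1) →
    ∀ (W I : Submodule ℝ (ℤ → (Fin n → ℝ))),
      W = Submodule.map (xiMap S) U →
      I = Submodule.map T (perSub n q) →
    -- the direct sum decomposition of Y_q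
    (W ⊓ I = ⊥ ∧ W ⊔ I = perSub n q) ∧
    -- invariance under Â₀, Ŝ₀ and σ
    (Submodule.map Ahat W ≤ W ∧ Submodule.map Ahat I ≤ I ∧
     Submodule.map Shat W ≤ W ∧ Submodule.map Shat I ≤ I ∧
     Submodule.map σl W ≤ W ∧ Submodule.map σl I ≤ I) := by
  intro Sl hSl σl Shat Ahat T hσ hShat hAhat hT U hU W I hW hI
  subst hSl hσ hShat hAhat hT hU hW hI
  have := finiteDimensional_perSub (n := n) hq
  rw [← perSub_inf_ker_eq_map_xiMap]
  have hA := commute_compLeft_compLeft_sub_funLeft_add_one ((Commute.refl _).add_left hcomm.symm)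
  have hShat := commute_compLeft_compLeft_sub_funLeft_add_one (Commute.refl (S : End ℝ (Fin n → ℝ)))
  have hσ := commute_funLeft_add_one_compLeft_sub_funLeft_add_one (S : End ℝ (Fin n → ℝ))
  have hAY : perSub n q ∈ End.invtSubmodule (((S : End ℝ (Fin n → ℝ)) + N).compLeft ℤ) :=
    fun _ => compLeft_mem_perSub _
  have hSY : perSub n q ∈ End.invtSubmodule ((S : End ℝ (Fin n → ℝ)).compLeft ℤ) :=
    fun _ => compLeft_mem_perSub _
  have hσY : perSub n q ∈ End.invtSubmodule (funLeft ℝ (Fin n → ℝ) (fun i : ℤ => i + 1)) :=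
    fun _ => funLeft_add_one_mem_perSub
  exact ⟨End.inf_ker_inf_map_eq_bot_and_sup_eq_of_isSemisimple_restrict _
      (isSemisimple_compLeft_sub_funLeft_add_one_restrict_perSub hq hS),
    End.map_inf_ker_le_of_commute hAY hA, End.map_map_le_of_commute hAY hA,
    End.map_inf_ker_le_of_commute hSY hShat, End.map_map_le_of_commute hSY hShat,
    End.map_inf_ker_le_of_commute hσY hσ, End.map_map_le_of_commute hσY hσ⟩

/-- `Y_q = ξ(U) ⊕ Im(Ŝ₀ − σ)` where `U = ker(S₀^q − I)`, and this decomposition is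
invariant under `Â₀`, `Ŝ₀` and `σ`. -/
theorem Yq_decomposition {n q : ℕ} (hq : 0 < q)
    (S : (Fin n → ℝ) ≃ₗ[ℝ] (Fin n → ℝ)) (N : (Fin n → ℝ) →ₗ[ℝ] (Fin n → ℝ))
    (hS : Module.End.IsSemisimple (S : (Fin n → ℝ) →ₗ[ℝ] (Fin n → ℝ)))
    (hN : IsNilpotent N)
    (hcomm : Commute (S : (Fin n → ℝ) →ₗ[ℝ] (Fin n → ℝ)) N)
    (hinv : Function.Bijective ((S : (Fin n → ℝ) →ₗ[ℝ] (Fin n → ℝ)) + N)) :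
    -- notation
    ∀ (Sl : (Fin n → ℝ) →ₗ[ℝ] (Fin n → ℝ)), Sl = (S : (Fin n → ℝ) →ₗ[ℝ] (Fin n → ℝ)) →
    ∀ (σl Shat Ahat T : (ℤ → (Fin n → ℝ)) →ₗ[ℝ] (ℤ → (Fin n → ℝ))),
      σl = LinearMap.funLeft ℝ (Fin n → ℝ) (fun i => i + 1) →
      Shat = Sl.compLeft ℤ →
      Ahat = (Sl + N).compLeft ℤ →
      T = Shat - σl →
    ∀ (U : Submodule ℝ (Fin n → ℝ)), U = LinearMap.ker (Sl ^ q - 1) →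
    ∀ (W I : Submodule ℝ (ℤ → (Fin n → ℝ))),
      W = Submodule.map (xiMap S) U →
      I = Submodule.map T (perSub n q) →
    -- the direct sum decomposition of Y_q
    (W ⊓ I = ⊥ ∧ W ⊔ I = perSub n q) ∧
    -- invariance under Â₀, Ŝ₀ and σ
    (Submodule.map Ahat W ≤ W ∧ Submodule.map Ahat I ≤ I ∧
     Submodule.map Shat W ≤ W ∧ Submodule.map Shat I ≤ I ∧
     Submodule.map σl W ≤ W ∧ Submodule.map σl I ≤ I) :=
  Yq_decomposition_general hq S N hS hcomm
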